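/- arXiv:0708.2202 — 2 statements merged into one kernel-verified Lean document; each statement's English description precedes it below -/
import Mathlib

section
/- For every a ∈ A one has Σ a₍₁₎ · ε(σ(S(a₍₂₎))) = S²(σ⁻¹(a)). (This expresses δ̂ ⊳ a = S²(σ⁻¹(a)), where δ̂ = ε∘σ∘S is the modular element of the dual, the convolution inverse of the character ε∘σ.) -/
/-!
Left invariance of `φ` yields the strong invariance `Σ a₍₁₎ φ(b a₍₂₎) = S(Σ b₍₁₎ φ(b₍₂₎ a))`:
for fixed `a` the map `W z = Σ a₍₁₎ φ(z a₍₂₎)` satisfies `id ⋆ W = φ(· a) 1` in the convolution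
algebra of `A`, so `W = S ⋆ φ(· a) 1`. Using it twice, with the modular property of `σ` in
between, gives `Σ S²(b₍₁₎) φ(b₍₂₎ x) = Σ (σb)₍₁₎ φ(x (σb)₍₂₎)`: the tensors `(S² ⊗ id) Δb` and
`(id ⊗ σ⁻¹) Δ(σb)` have the same slices against every `φ(· x)`. Faithfulness of `φ` on both
sides upgrades this to equal slices against every functional, and slicing with `ε` gives
`(ε ∘ σ⁻¹) ⊳ a = S²(σ⁻¹ a)`. Finally `ε ∘ σ ∘ S` and `ε ∘ σ⁻¹` are both convolution inverses
of the character `ε ∘ σ` (the second because `χ ∘ S² = χ` for every character `χ`).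
-/

open TensorProduct HopfAlgebra

/-- `f ⊳ a = Σ a₍₁₎ f(a₍₂₎)` : the standard left action of a linear functional on `A`. -/
noncomputable def lAct {A : Type*} [Ring A] [HopfAlgebra ℂ A] (f : A →ₗ[ℂ] ℂ) : A →ₗ[ℂ] A :=
  (TensorProduct.rid ℂ A).toLinearMap ∘ₗ LinearMap.lTensor A f ∘ₗ Coalgebra.comul

open Coalgebra WithConv

section Slices

variable {R M M' N : Type*} [CommSemiring R] [AddCommMonoid M] [Module R M]
  [AddCommMonoid M'] [Module R M'] [AddCommMonoid N] [Module R N]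

theorem TensorProduct.apply_lid_rTensor_eq_apply_rid_lTensor (f : N →ₗ[R] R) (g : M →ₗ[R] R)
    (T : M ⊗[R] N) :
    f (TensorProduct.lid R N (LinearMap.rTensor N g T)) =
      g (TensorProduct.rid R M (LinearMap.lTensor M f T)) := by
  induction T using TensorProduct.induction_on with
  | zero => simp
  | tmul m n => simp [mul_comm]
  | add T₁ T₂ h₁ h₂ => simp [h₁, h₂]

theorem TensorProduct.rid_lTensor_rTensor (f : N →ₗ[R] R) (P : M →ₗ[R] M') (T : M ⊗[R] N) :
    TensorProduct.rid R M' (LinearMap.lTensor M' f (LinearMap.rTensor N P T)) =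
      P (TensorProduct.rid R M (LinearMap.lTensor M f T)) := by
  induction T using TensorProduct.induction_on with
  | zero => simp
  | tmul m n => simp
  | add T₁ T₂ h₁ h₂ => simp [h₁, h₂]

end Slices

theorem rid_lTensor_eq_of_forall_comp_mulRight {R A : Type*} [CommRing R] [Ring A]
    [Algebra R A] {φ : A →ₗ[R] R} (hφ₁ : ∀ a : A, (∀ b : A, φ (a * b) = 0) → a = 0)
    (hφ₂ : ∀ a : A, (∀ b : A, φ (b * a) = 0) → a = 0) {T₁ T₂ : A ⊗[R] A}
    (h : ∀ x : A, TensorProduct.rid R A (LinearMap.lTensor A (φ ∘ₗ LinearMap.mulRight R x) T₁) =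
      TensorProduct.rid R A (LinearMap.lTensor A (φ ∘ₗ LinearMap.mulRight R x) T₂))
    (g : A →ₗ[R] R) :
    TensorProduct.rid R A (LinearMap.lTensor A g T₁) =
      TensorProduct.rid R A (LinearMap.lTensor A g T₂) := by
  rw [← sub_eq_zero, ← map_sub, ← map_sub]
  replace h (x : A) :
      TensorProduct.rid R A (LinearMap.lTensor A (φ ∘ₗ LinearMap.mulRight R x) (T₁ - T₂)) = 0 := by
    rw [map_sub, map_sub, h x, sub_self]
  generalize T₁ - T₂ = T at h ⊢
  refine hφ₂ _ fun c => ?_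
  have hc : TensorProduct.lid R A (LinearMap.rTensor A (φ ∘ₗ LinearMap.mulLeft R c) T) = 0 :=
    hφ₁ _ fun x => by
      simpa [h x] using TensorProduct.apply_lid_rTensor_eq_apply_rid_lTensor
        (φ ∘ₗ LinearMap.mulRight R x) (φ ∘ₗ LinearMap.mulLeft R c) T
  simpa [hc] using (TensorProduct.apply_lid_rTensor_eq_apply_rid_lTensor g
    (φ ∘ₗ LinearMap.mulLeft R c) T).symm

theorem HopfAlgebra.toConv_eq_antipode_mul_of_id_mul {R A : Type*} [CommSemiring R] [Semiring A]
    [HopfAlgebra R A] {W w : A →ₗ[R] A} (h : toConv LinearMap.id * toConv W = toConv w) :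
    toConv W = toConv (antipode R) * toConv w := by
  rw [← h, ← mul_assoc, LinearMap.antipode_mul_id, one_mul]

namespace AlgHom

variable {R A : Type*} [CommSemiring R] [Semiring A] [HopfAlgebra R A] (χ : A →ₐ[R] R)

theorem toConv_comp_antipode_mul_toConv :
    toConv (χ.toLinearMap ∘ₗ antipode R) * toConv χ.toLinearMap = 1 := by
  have h := LinearMap.algHom_comp_convMul_distrib χ (toConv (antipode R)) (toConv LinearMap.id)
  rw [LinearMap.antipode_mul_id] at h
  refine ofConv_injective (h.symm.trans ?_)
  ext a
  simp [LinearMap.convOne_def]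

noncomputable def compAntipode : A →ₐ[R] R :=
  .ofLinearMap (χ.toLinearMap ∘ₗ antipode R) (by simp)
    fun a b => by simp [antipode_mul_antidistrib, mul_comm]

theorem comp_antipode_comp_antipode :
    χ.toLinearMap ∘ₗ antipode R ∘ₗ antipode R = χ.toLinearMap :=
  toConv_injective <| left_inv_eq_right_inv χ.compAntipode.toConv_comp_antipode_mul_toConv
    χ.toConv_comp_antipode_mul_toConv

theorem comp_antipode_eq_of_toConv_mul_eq_one {g : A →ₗ[R] R}
    (h : toConv χ.toLinearMap * toConv g = 1) : χ.toLinearMap ∘ₗ antipode R = g :=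
  toConv_injective (left_inv_eq_right_inv χ.toConv_comp_antipode_mul_toConv h)

end AlgHom

section LeftAction

variable {A : Type*} [Ring A] [HopfAlgebra ℂ A]

theorem lAct_apply_eq_sum {a : A} {ι : Type*} (𝓡 : Repr ℂ a ι) (f : A →ₗ[ℂ] ℂ) :
    lAct f a = ∑ i ∈ 𝓡.index, f (𝓡.right i) • 𝓡.left i := by
  simp [lAct, ← 𝓡.eq]

theorem lAct_counit (a : A) : lAct counit a = a := by
  simp [lAct, lTensor_counit_comul]

theorem toConv_mul_toConv_apply_eq_lAct (f g : A →ₗ[ℂ] ℂ) (a : A) :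
    (toConv f * toConv g) a = f (lAct g a) := by
  simp [(ℛ ℂ a).convMul_apply, lAct_apply_eq_sum (ℛ ℂ a), mul_comm]

theorem toConv_antipode_mul_apply_eq_antipode_lAct (f : A →ₗ[ℂ] ℂ) (a : A) :
    (toConv (antipode ℂ (A := A)) * toConv (Algebra.linearMap ℂ A ∘ₗ f)) a =
      antipode ℂ (lAct f a) := by
  simp [(ℛ ℂ a).convMul_apply, lAct_apply_eq_sum (ℛ ℂ a), Algebra.algebraMap_eq_smul_one]

variable {φ : A →ₗ[ℂ] ℂ}

theorem lAct_comp_mulLeft (hφ : ∀ a : A, lAct φ a = φ a • (1 : A)) (a b : A) :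
    lAct (φ ∘ₗ LinearMap.mulLeft ℂ b) a = antipode ℂ (lAct (φ ∘ₗ LinearMap.mulRight ℂ a) b) := by
  let W : A →ₗ[ℂ] A := ∑ i ∈ (ℛ ℂ a).index,
    (φ ∘ₗ LinearMap.mulRight ℂ ((ℛ ℂ a).right i)).smulRight ((ℛ ℂ a).left i)
  have hW (z : A) : W z = lAct (φ ∘ₗ LinearMap.mulLeft ℂ z) a := by
    simp [W, lAct_apply_eq_sum (ℛ ℂ a)]
  have hid : toConv LinearMap.id * toConv W =
      toConv (Algebra.linearMap ℂ A ∘ₗ φ ∘ₗ LinearMap.mulRight ℂ a) := by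
    ext z
    rw [(ℛ ℂ z).convMul_apply, LinearMap.comp_apply, Algebra.linearMap_apply,
      Algebra.algebraMap_eq_smul_one, LinearMap.comp_apply, LinearMap.mulRight_apply, ← hφ,
      lAct_apply_eq_sum ((ℛ ℂ z).mul (ℛ ℂ a)), Repr.mul_index, Finset.sum_product]
    simp [W, Finset.mul_sum]
  rw [← hW, ← toConv_antipode_mul_apply_eq_antipode_lAct,
    ← HopfAlgebra.toConv_eq_antipode_mul_of_id_mul hid]

theorem antipode_antipode_lAct_comp_mulRight (hφ : ∀ a : A, lAct φ a = φ a • (1 : A))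
    {σ : A ≃ₐ[ℂ] A} (hσ : ∀ a b : A, φ (a * b) = φ (b * σ a)) (x b : A) :
    antipode ℂ (antipode ℂ (lAct (φ ∘ₗ LinearMap.mulRight ℂ x) b)) =
      lAct (φ ∘ₗ LinearMap.mulLeft ℂ x) (σ b) := by
  have hb : φ ∘ₗ LinearMap.mulLeft ℂ b = φ ∘ₗ LinearMap.mulRight ℂ (σ b) :=
    LinearMap.ext (hσ b)
  rw [← lAct_comp_mulLeft hφ, hb, lAct_comp_mulLeft hφ]

theorem lAct_counit_comp_symm (hφ : ∀ a : A, lAct φ a = φ a • (1 : A))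
    (hφ₁ : ∀ a : A, (∀ b : A, φ (a * b) = 0) → a = 0)
    (hφ₂ : ∀ a : A, (∀ b : A, φ (b * a) = 0) → a = 0)
    {σ : A ≃ₐ[ℂ] A} (hσ : ∀ a b : A, φ (a * b) = φ (b * σ a)) (a : A) :
    lAct (counit ∘ₗ σ.symm.toLinearMap) a = antipode ℂ (antipode ℂ (σ.symm a)) := by
  let T₁ := LinearMap.rTensor A (antipode ℂ ∘ₗ antipode ℂ) (comul (σ.symm a))
  let T₂ := LinearMap.lTensor A σ.symm.toLinearMap (comul a)
  have slice₁ (f : A →ₗ[ℂ] ℂ) : TensorProduct.rid ℂ A (LinearMap.lTensor A f T₁) =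
      antipode ℂ (antipode ℂ (lAct f (σ.symm a))) := by
    rw [TensorProduct.rid_lTensor_rTensor]; rfl
  have slice₂ (f : A →ₗ[ℂ] ℂ) : TensorProduct.rid ℂ A (LinearMap.lTensor A f T₂) =
      lAct (f ∘ₗ σ.symm.toLinearMap) a := by
    rw [← LinearMap.lTensor_comp_apply]; rfl
  have h := rid_lTensor_eq_of_forall_comp_mulRight hφ₁ hφ₂ (T₁ := T₁) (T₂ := T₂) (fun x => by
      have hx : (φ ∘ₗ LinearMap.mulRight ℂ x) ∘ₗ σ.symm.toLinearMap =
          φ ∘ₗ LinearMap.mulLeft ℂ x :=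
        LinearMap.ext fun c => by simpa using hσ (σ.symm c) x
      rw [slice₁, slice₂, hx, antipode_antipode_lAct_comp_mulRight hφ hσ, σ.apply_symm_apply])
    counit
  rwa [slice₁, slice₂, lAct_counit, eq_comm] at h

end LeftAction

theorem dual_modular_element_left_action_general
    {A : Type*} [Ring A] [HopfAlgebra ℂ A]
    (φ : A →ₗ[ℂ] ℂ)
    (hφL : ∀ a : A,
      (TensorProduct.rid ℂ A) (LinearMap.lTensor A φ (Coalgebra.comul a)) = φ a • (1 : A))
    (hφf1 : ∀ a : A, (∀ b : A, φ (a * b) = 0) → a = 0)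
    (hφf2 : ∀ a : A, (∀ b : A, φ (b * a) = 0) → a = 0)
    (σ : A ≃ₐ[ℂ] A) (hσ : ∀ a b : A, φ (a * b) = φ (b * σ a)) :
    ∀ a : A,
      lAct (Coalgebra.counit ∘ₗ σ.toLinearMap ∘ₗ antipode (R := ℂ)) a =
        antipode (R := ℂ) (antipode (R := ℂ) (σ.symm a)) := by
  have hlAct := lAct_counit_comp_symm hφL hφf1 hφf2 hσ
  let χ : A →ₐ[ℂ] ℂ := (Bialgebra.counitAlgHom ℂ A).comp σ.toAlgHom
  have hχ : toConv χ.toLinearMap * toConv (counit ∘ₗ σ.symm.toLinearMap) = 1 := by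
    ext a
    rw [toConv_mul_toConv_apply_eq_lAct, hlAct]
    simpa [χ] using congr($χ.comp_antipode_comp_antipode (σ.symm a))
  intro a
  rw [← hlAct, ← χ.comp_antipode_eq_of_toConv_mul_eq_one hχ]
  rfl

/-- `Σ a₍₁₎ ε(σ(S(a₍₂₎))) = S²(σ⁻¹(a))`, i.e. `δ̂ ⊳ a = S²(σ⁻¹(a))` where
`δ̂ = ε∘σ∘S` is the modular element of the dual. -/
theorem dual_modular_element_left_action
    {A : Type*} [Ring A] [HopfAlgebra ℂ A]
    (hS : Function.Bijective (antipode (R := ℂ) (A := A)))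
    (φ : A →ₗ[ℂ] ℂ) (hφ0 : φ ≠ 0)
    (hφL : ∀ a : A,
      (TensorProduct.rid ℂ A) (LinearMap.lTensor A φ (Coalgebra.comul a)) = φ a • (1 : A))
    (hφf1 : ∀ a : A, (∀ b : A, φ (a * b) = 0) → a = 0)
    (hφf2 : ∀ a : A, (∀ b : A, φ (b * a) = 0) → a = 0)
    (σ : A ≃ₐ[ℂ] A) (hσ : ∀ a b : A, φ (a * b) = φ (b * σ a)) :
    ∀ a : A,
      lAct (Coalgebra.counit ∘ₗ σ.toLinearMap ∘ₗ antipode (R := ℂ)) a =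
        antipode (R := ℂ) (antipode (R := ℂ) (σ.symm a)) :=
  dual_modular_element_left_action_general φ hφL hφf1 hφf2 σ hσ
end

section
/- The space of Fourier transforms = {φ(·a) : a ∈ A} is closed under the convolution product of the dual: for all a, b ∈ A there exists c ∈ A such that Σ φ(x₍₁₎·a)·φ(x₍₂₎·b) = φ(x·c) for every x ∈ A. -/
open TensorProduct HopfAlgebra Coalgebra LinearMap

/-!
For `ψ_a = φ(· a)`, the left invariance of `φ` gives
`S(Σ x₁ φ(x₂ b)) = Σ S(x₁) (id ⊗ φ)(Δ(x₂ b)) = (id ⊗ φ)((Σ S(x₁) x₂ ⊗ x₃) Δb) = Σ b₁ φ(x b₂)`,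
because `Σ S(x₁) x₂ ⊗ x₃ = 1 ⊗ x`. Inverting `S`,
`(ψ_a ∗ ψ_b)(x) = φ((Σ x₁ φ(x₂ b)) a) = Σ φ(S⁻¹(b₁) a) φ(x b₂) = φ(x c)`
with `c = Σ φ(S⁻¹(b₁) a) b₂`.
-/

namespace TensorProduct

variable {R M N : Type*} [CommSemiring R] [AddCommMonoid M] [Module R M] [AddCommMonoid N]
  [Module R N]

noncomputable def rightSlice (ψ : N →ₗ[R] R) : M ⊗[R] N →ₗ[R] M :=
  (TensorProduct.rid R M).toLinearMap ∘ₗ ψ.lTensor M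

noncomputable def leftSlice (g : M →ₗ[R] R) : M ⊗[R] N →ₗ[R] N :=
  (TensorProduct.lid R N).toLinearMap ∘ₗ g.rTensor N

@[simp]
theorem rightSlice_tmul (ψ : N →ₗ[R] R) (m : M) (n : N) :
    rightSlice ψ (m ⊗ₜ n) = ψ n • m := rfl

@[simp]
theorem leftSlice_tmul (g : M →ₗ[R] R) (m : M) (n : N) :
    leftSlice g (m ⊗ₜ n) = g m • n := rfl

theorem lid_map_eq_apply_rightSlice (f : M →ₗ[R] R) (ψ : N →ₗ[R] R) (t : M ⊗[R] N) :
    TensorProduct.lid R R (map f ψ t) = f (rightSlice ψ t) := by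
  induction t using TensorProduct.induction_on with
  | zero => simp
  | tmul m n => simp [mul_comm]
  | add t₁ t₂ h₁ h₂ => simp [h₁, h₂]

section Algebra

variable {R A : Type*} [CommSemiring R] [Semiring A] [Algebra R A]

theorem rightSlice_tmul_one_mul (φ : A →ₗ[R] R) (y : A) (t : A ⊗[R] A) :
    rightSlice φ ((y ⊗ₜ 1) * t) = y * rightSlice φ t := by
  induction t using TensorProduct.induction_on with
  | zero => simp
  | tmul p q => simp [Algebra.TensorProduct.tmul_mul_tmul]
  | add t₁ t₂ h₁ h₂ => simp [mul_add, h₁, h₂]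

theorem apply_rightSlice_one_tmul_mul (g φ : A →ₗ[R] R) (x : A) (t : A ⊗[R] A) :
    g (rightSlice φ ((1 ⊗ₜ x) * t)) = φ (x * leftSlice g t) := by
  induction t using TensorProduct.induction_on with
  | zero => simp
  | tmul p q => simp [Algebra.TensorProduct.tmul_mul_tmul, mul_comm]
  | add t₁ t₂ h₁ h₂ => simp [mul_add, h₁, h₂]

end Algebra

end TensorProduct

namespace Bialgebra

variable {R A : Type*} [CommSemiring R] [Semiring A] [Bialgebra R A]

def IsLeftIntegral (φ : A →ₗ[R] R) : Prop :=
  ∀ a : A, rightSlice φ (comul a) = φ a • 1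

end Bialgebra

namespace HopfAlgebra

variable {R A : Type*} [CommSemiring R] [Semiring A] [HopfAlgebra R A]

variable (R A) in
noncomputable def antipodeMulComul : A ⊗[R] A →ₗ[R] A ⊗[R] A :=
  mul' R (A ⊗[R] A) ∘ₗ map (Algebra.TensorProduct.includeLeft.toLinearMap ∘ₗ antipode R) comul

@[simp]
theorem antipodeMulComul_tmul (y z : A) :
    antipodeMulComul R A (y ⊗ₜ z) = (antipode R y ⊗ₜ 1) * comul z := rfl

@[simp]
theorem antipodeMulComul_comul (x : A) : antipodeMulComul R A (comul x) = 1 ⊗ₜ x := by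
  have hassoc : mul' R (A ⊗[R] A) ∘ₗ
      rTensor (A ⊗[R] A) (Algebra.TensorProduct.includeLeft.toLinearMap ∘ₗ antipode R) ∘ₗ
        (TensorProduct.assoc R A A A).toLinearMap =
      rTensor A (mul' R A ∘ₗ rTensor A (antipode R)) := by
    ext p q r
    simp
  calc antipodeMulComul R A (comul x)
      = mul' R (A ⊗[R] A) (rTensor (A ⊗[R] A)
          (Algebra.TensorProduct.includeLeft.toLinearMap ∘ₗ antipode R)
          (TensorProduct.assoc R A A A (rTensor A comul (comul x)))) := by
        rw [coassoc_apply, antipodeMulComul, ← rTensor_comp_lTensor]; rfl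
    _ = rTensor A (mul' R A ∘ₗ rTensor A (antipode R)) (rTensor A comul (comul x)) :=
        congr($hassoc _)
    _ = 1 ⊗ₜ x := by
        rw [← rTensor_comp_apply, comp_assoc, mul_antipode_rTensor_comul]
        simp [rTensor_comp]

theorem antipode_rightSlice_comp_mulRight_comul {φ : A →ₗ[R] R}
    (hφ : Bialgebra.IsLeftIntegral φ) (b x : A) :
    antipode R (rightSlice (φ ∘ₗ mulRight R b) (comul x)) =
      rightSlice φ ((1 ⊗ₜ x) * comul b) := by
  have h : antipode R ∘ₗ rightSlice (φ ∘ₗ mulRight R b) =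
      rightSlice φ ∘ₗ mulRight R (comul b) ∘ₗ antipodeMulComul R A := by
    ext y z
    simp [mul_assoc, ← Bialgebra.comul_mul, rightSlice_tmul_one_mul, hφ (z * b)]
  simpa using congr($h (comul x))

end HopfAlgebra

theorem fourier_transforms_closed_under_convolution_general
    {A : Type*} [Ring A] [HopfAlgebra ℂ A]
    (hS : Function.Bijective (antipode (R := ℂ) (A := A)))
    (φ : A →ₗ[ℂ] ℂ)
    (hφL : ∀ a : A,
      (TensorProduct.rid ℂ A) (LinearMap.lTensor A φ (Coalgebra.comul a)) = φ a • (1 : A)) :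
    ∀ a b : A, ∃ c : A, ∀ x : A,
      (TensorProduct.lid ℂ ℂ)
          (TensorProduct.map (φ ∘ₗ LinearMap.mulRight ℂ a) (φ ∘ₗ LinearMap.mulRight ℂ b)
            (Coalgebra.comul (R := ℂ) x)) = φ (x * c) := by
  intro a b
  let S := LinearEquiv.ofBijective (antipode ℂ) hS
  refine ⟨leftSlice (φ ∘ₗ mulRight ℂ a ∘ₗ S.symm.toLinearMap) (comul b), fun x => ?_⟩
  have hL : rightSlice (φ ∘ₗ mulRight ℂ b) (comul x) =
      S.symm (rightSlice φ ((1 ⊗ₜ x) * comul b)) :=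
    S.eq_symm_apply.mpr (antipode_rightSlice_comp_mulRight_comul hφL b x)
  rw [lid_map_eq_apply_rightSlice, hL]
  exact apply_rightSlice_one_tmul_mul (φ ∘ₗ mulRight ℂ a ∘ₗ S.symm.toLinearMap) φ x (comul b)

/-- The space of Fourier transforms `{φ(·a) : a ∈ A}` is closed under the convolution
product of the dual: `φ(·a) ∗ φ(·b) = φ(·c)` for some `c ∈ A`. -/
theorem fourier_transforms_closed_under_convolution
    {A : Type*} [Ring A] [HopfAlgebra ℂ A]
    (hS : Function.Bijective (antipode (R := ℂ) (A := A)))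
    (φ : A →ₗ[ℂ] ℂ) (hφ0 : φ ≠ 0)
    (hφL : ∀ a : A,
      (TensorProduct.rid ℂ A) (LinearMap.lTensor A φ (Coalgebra.comul a)) = φ a • (1 : A)) :
    ∀ a b : A, ∃ c : A, ∀ x : A,
      (TensorProduct.lid ℂ ℂ)
          (TensorProduct.map (φ ∘ₗ LinearMap.mulRight ℂ a) (φ ∘ₗ LinearMap.mulRight ℂ b)
            (Coalgebra.comul (R := ℂ) x)) = φ (x * c) :=
  fourier_transforms_closed_under_convolution_general hS φ hφL
end
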